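/- Let (s₁, s₂) ∈ {−1, +1}² and λ = λ(s₁, s₂). Then 2 K_m K_p' + 2 K_p K_m' − J_p J_m = −4 (p cosh(2γ) − s₂ a_p √(1 + p² sinh²(2γ)))(p cosh(2γ) − s₂ a_m √(1 + p² sinh²(2γ))). -/

import Mathlib

noncomputable section
open Complex Matrix

/-- `K_* = p λ − a_* e^{−2γ}` (real `λ`). -/
def Kre (γ p aS lam : ℝ) : ℝ := p * lam - aS * Real.exp (-(2 * γ))

/-- `K_*' = a_* e^{2γ} − p λ⁻¹` (real `λ`). -/
def Kre' (γ p aS lam : ℝ) : ℝ := aS * Real.exp (2 * γ) - p * lam⁻¹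

/-- `J_* = λ − λ⁻¹ + 2 p a_* sinh(2γ)` (real `λ`). -/
def Jre (γ p aS lam : ℝ) : ℝ := lam - lam⁻¹ + 2 * p * aS * Real.sinh (2 * γ)

/-- `λ(s₁, s₂) = s₁ p sinh(2γ) + s₂ √(1 + p² sinh²(2γ))`. -/
def lamSS (γ p s₁ s₂ : ℝ) : ℝ :=
  s₁ * p * Real.sinh (2 * γ) + s₂ * Real.sqrt (1 + p ^ 2 * Real.sinh (2 * γ) ^ 2)

/-!
For `λ ≠ 0` the combination `2 K_m K_p' + 2 K_p K_m' − J_p J_m` depends on `λ` only through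
`λ + λ⁻¹` and `(λ − λ⁻¹)²`: writing `e^{±2γ} = cosh 2γ ± sinh 2γ`, the `sinh` terms coming from the
`K`'s cancel against the cross terms of `J_p J_m`. The two roots `λ(s₁, s₂)` of
`λ − λ⁻¹ = 2 s₁ p sinh 2γ` have `λ⁻¹ = s₂ √(1 + p² sinh² 2γ) − s₁ p sinh 2γ`, so
`λ + λ⁻¹ = 2 s₂ √(1 + p² sinh² 2γ)`, and the combination factors as claimed.
-/

theorem Kre_Kre'_Jre_combination_eq (γ p aP aM lam : ℝ) (hlam : lam ≠ 0) :
    2 * Kre γ p aM lam * Kre' γ p aP lam + 2 * Kre γ p aP lam * Kre' γ p aM lam -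
        Jre γ p aP lam * Jre γ p aM lam =
      2 * p * (aP + aM) * Real.cosh (2 * γ) * (lam + lam⁻¹) - (lam - lam⁻¹) ^ 2 - 4 * p ^ 2 -
        4 * aP * aM * (1 + p ^ 2 * Real.sinh (2 * γ) ^ 2) := by
  have hexp : Real.exp (2 * γ) = Real.cosh (2 * γ) + Real.sinh (2 * γ) :=
    (Real.cosh_add_sinh _).symm
  have hexp_neg : Real.exp (-(2 * γ)) = Real.cosh (2 * γ) - Real.sinh (2 * γ) :=
    (Real.cosh_sub_sinh _).symm
  simp only [Kre, Kre', Jre, hexp, hexp_neg]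
  linear_combination
    (-4 * p ^ 2) * mul_inv_cancel₀ hlam - 4 * aP * aM * Real.cosh_sq_sub_sinh_sq (2 * γ)

section lamSS

variable (γ p s₁ s₂ : ℝ)

theorem lamSS_mul_eq_one (hs₁ : s₁ ^ 2 = 1) (hs₂ : s₂ ^ 2 = 1) :
    lamSS γ p s₁ s₂ *
        (s₂ * Real.sqrt (1 + p ^ 2 * Real.sinh (2 * γ) ^ 2) - s₁ * p * Real.sinh (2 * γ)) = 1 := by
  have hsqrt := Real.sq_sqrt (by positivity : (0 : ℝ) ≤ 1 + p ^ 2 * Real.sinh (2 * γ) ^ 2)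
  rw [lamSS]
  linear_combination (s₂ ^ 2) * hsqrt + (1 + p ^ 2 * Real.sinh (2 * γ) ^ 2) * hs₂ -
    p ^ 2 * Real.sinh (2 * γ) ^ 2 * hs₁

theorem lamSS_inv (hs₁ : s₁ ^ 2 = 1) (hs₂ : s₂ ^ 2 = 1) :
    (lamSS γ p s₁ s₂)⁻¹ =
      s₂ * Real.sqrt (1 + p ^ 2 * Real.sinh (2 * γ) ^ 2) - s₁ * p * Real.sinh (2 * γ) :=
  inv_eq_of_mul_eq_one_right (lamSS_mul_eq_one γ p s₁ s₂ hs₁ hs₂)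

theorem lamSS_add_inv (hs₁ : s₁ ^ 2 = 1) (hs₂ : s₂ ^ 2 = 1) :
    lamSS γ p s₁ s₂ + (lamSS γ p s₁ s₂)⁻¹ =
      2 * s₂ * Real.sqrt (1 + p ^ 2 * Real.sinh (2 * γ) ^ 2) := by
  rw [lamSS_inv γ p s₁ s₂ hs₁ hs₂, lamSS]
  ring

theorem lamSS_sub_inv (hs₁ : s₁ ^ 2 = 1) (hs₂ : s₂ ^ 2 = 1) :
    lamSS γ p s₁ s₂ - (lamSS γ p s₁ s₂)⁻¹ = 2 * s₁ * p * Real.sinh (2 * γ) := by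
  rw [lamSS_inv γ p s₁ s₂ hs₁ hs₂, lamSS]
  ring

end lamSS

theorem identity_at_lamSS_general (γ p : ℝ)
    (aP aM : ℝ)
    (s₁ s₂ : ℝ) (hs₁ : s₁ = 1 ∨ s₁ = -1) (hs₂ : s₂ = 1 ∨ s₂ = -1) :
    2 * Kre γ p aM (lamSS γ p s₁ s₂) * Kre' γ p aP (lamSS γ p s₁ s₂) +
        2 * Kre γ p aP (lamSS γ p s₁ s₂) * Kre' γ p aM (lamSS γ p s₁ s₂) -
        Jre γ p aP (lamSS γ p s₁ s₂) * Jre γ p aM (lamSS γ p s₁ s₂) =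
      -4 * (p * Real.cosh (2 * γ) -
          s₂ * aP * Real.sqrt (1 + p ^ 2 * Real.sinh (2 * γ) ^ 2)) *
        (p * Real.cosh (2 * γ) -
          s₂ * aM * Real.sqrt (1 + p ^ 2 * Real.sinh (2 * γ) ^ 2)) := by
  have hs₁_sq : s₁ ^ 2 = 1 := by rcases hs₁ with rfl | rfl <;> norm_num
  have hs₂_sq : s₂ ^ 2 = 1 := by rcases hs₂ with rfl | rfl <;> norm_num
  have hlam : lamSS γ p s₁ s₂ ≠ 0 :=
    left_ne_zero_of_mul_eq_one (lamSS_mul_eq_one γ p s₁ s₂ hs₁_sq hs₂_sq)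
  have hsqrt := Real.sq_sqrt (by positivity : (0 : ℝ) ≤ 1 + p ^ 2 * Real.sinh (2 * γ) ^ 2)
  rw [Kre_Kre'_Jre_combination_eq γ p aP aM _ hlam, lamSS_add_inv γ p s₁ s₂ hs₁_sq hs₂_sq,
    lamSS_sub_inv γ p s₁ s₂ hs₁_sq hs₂_sq]
  linear_combination (4 * aP * aM * (1 + p ^ 2 * Real.sinh (2 * γ) ^ 2)) * hs₂_sq +
    (-4 * p ^ 2 * Real.sinh (2 * γ) ^ 2) * hs₁_sq + 4 * aP * aM * s₂ ^ 2 * hsqrt +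
    4 * p ^ 2 * Real.cosh_sq_sub_sinh_sq (2 * γ)

/-- Identity for `2 K_m K_p' + 2 K_p K_m' − J_p J_m` at `λ = λ(s₁, s₂)`. -/
theorem identity_at_lamSS (γ p : ℝ) (hp : p ∈ Set.Ioo (-1 : ℝ) 1) (q : ℂ)
    (hq : p ^ 2 + ‖q‖ ^ 2 = 1)
    (aP aM : ℝ) (haP : aP ∈ Set.Ioo (-1 : ℝ) 1) (haM : aM ∈ Set.Ioo (-1 : ℝ) 1)
    (s₁ s₂ : ℝ) (hs₁ : s₁ = 1 ∨ s₁ = -1) (hs₂ : s₂ = 1 ∨ s₂ = -1) :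
    2 * Kre γ p aM (lamSS γ p s₁ s₂) * Kre' γ p aP (lamSS γ p s₁ s₂) +
        2 * Kre γ p aP (lamSS γ p s₁ s₂) * Kre' γ p aM (lamSS γ p s₁ s₂) -
        Jre γ p aP (lamSS γ p s₁ s₂) * Jre γ p aM (lamSS γ p s₁ s₂) =
      -4 * (p * Real.cosh (2 * γ) -
          s₂ * aP * Real.sqrt (1 + p ^ 2 * Real.sinh (2 * γ) ^ 2)) *
        (p * Real.cosh (2 * γ) -
          s₂ * aM * Real.sqrt (1 + p ^ 2 * Real.sinh (2 * γ) ^ 2)) :=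
  identity_at_lamSS_general γ p aP aM s₁ s₂ hs₁ hs₂
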